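/- arXiv:2202.01391 — 2 statements merged into one kernel-verified Lean document; each statement's English description precedes it below -/
import Mathlib

section
/- Let f_1,…,f_ℓ be positive integers with f = Σ_j f_j, and let v ∈ ℕ^ℓ be 3-approximately fair. Let P be the residual profile after greedily removing a maximal number of fairlets from v, i.e., P = v − n₀·(f_1,…,f_ℓ) where n₀ = min_j ⌊v_j / f_j⌋. Then ‖P‖₁ < 4f. -/
/-!
Let `j₀` be a group attaining `n₀ = min_j ⌊v_j / f_j⌋`, so that `v_{j₀} < (n₀ + 1) f_{j₀}`.
Approximate fairness of group `j₀` says `(f_{j₀} / f) · |v| ≤ v_{j₀} + 3 < (n₀ + 1 + 3) f_{j₀}`,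
hence `|v| < (n₀ + 4) f`. Removing `n₀` fairlets deletes exactly `n₀ f` points, leaving fewer than `4f`.
-/

open Finset

namespace Finset

variable {ι : Type*} {s : Finset ι} (hs : s.Nonempty) {a b : ι → ℕ}

theorem inf'_div_mul_le {i : ι} (hi : i ∈ s) :
    s.inf' hs (fun j => a j / b j) * b i ≤ a i :=
  (Nat.mul_le_mul_right _ (inf'_le _ hi)).trans (Nat.div_mul_le_self _ _)

theorem exists_lt_inf'_div_succ_mul (hb : ∀ j ∈ s, 0 < b j) :
    ∃ i ∈ s, a i < (s.inf' hs (fun j => a j / b j) + 1) * b i := by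
  obtain ⟨i, hi, hmin⟩ := exists_mem_eq_inf' hs (fun j => a j / b j)
  refine ⟨i, hi, ?_⟩
  rw [hmin, mul_comm]
  exact Nat.lt_mul_div_succ _ (hb i hi)

end Finset

theorem Finset.sum_tsub_mul_eq {ι : Type*} (s : Finset ι) (a b : ι → ℕ) (n : ℕ)
    (h : ∀ i ∈ s, n * b i ≤ a i) :
    ∑ i ∈ s, (a i - n * b i) = ∑ i ∈ s, a i - n * ∑ i ∈ s, b i := by
  rw [sum_tsub_distrib _ h, mul_sum]

theorem lt_mul_of_abs_sub_div_mul_le {x w f V n c : ℝ} (hf : 0 < f) (hw : 1 ≤ w) (hc : 0 ≤ c)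
    (hfair : |x - w / f * V| ≤ c) (hx : x < (n + 1) * w) :
    V < (n + 1 + c) * f := by
  have hw₀ : 0 < w := one_pos.trans_le hw
  have hshare : w / f * V < (n + 1 + c) * w := by
    nlinarith [(abs_le.mp hfair).1]
  rw [div_mul_eq_mul_div, div_lt_iff₀ hf] at hshare
  nlinarith

/-- Lemma 4.2: after greedily removing a maximal number of fairlets from a
3-approximately fair profile, fewer than `4f` (problematic) points remain. -/
theorem problematic_points_few {ℓ : ℕ} (hℓ : 0 < ℓ) (fvec : Fin ℓ → ℕ)
    (hfvec : ∀ j, 0 < fvec j) (f : ℕ) (hf : f = ∑ j, fvec j)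
    (v : Fin ℓ → ℕ)
    (hfair : ∀ j, |(v j : ℝ) - (fvec j : ℝ) / (f : ℝ) * (∑ i, v i : ℕ)| ≤ 3)
    (n₀ : ℕ)
    (hn₀ : n₀ = Finset.univ.inf' ⟨⟨0, hℓ⟩, Finset.mem_univ _⟩ (fun j => v j / fvec j))
    (P : Fin ℓ → ℕ) (hP : ∀ j, P j = v j - n₀ * fvec j) :
    ∑ j, P j < 4 * f := by
  have hfpos : 0 < f := hf ▸ sum_pos (fun j _ => hfvec j) ⟨⟨0, hℓ⟩, mem_univ _⟩
  obtain ⟨j₀, -, hj₀⟩ := exists_lt_inf'_div_succ_mul (a := v) ⟨⟨0, hℓ⟩, mem_univ _⟩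
    (fun j _ => hfvec j)
  rw [← hn₀] at hj₀
  have htotal : ∑ i, v i < (n₀ + 4) * f := by
    have := lt_mul_of_abs_sub_div_mul_le (n := n₀) (by exact_mod_cast hfpos)
      (by exact_mod_cast hfvec j₀) zero_le_three (hfair j₀) (by exact_mod_cast hj₀)
    norm_num [add_assoc] at this
    exact_mod_cast this
  have hremoved : ∀ j ∈ univ, n₀ * fvec j ≤ v j := fun j hj => hn₀ ▸ inf'_div_mul_le _ hj
  have hsum_le : n₀ * f ≤ ∑ i, v i := hf ▸ mul_sum univ fvec n₀ ▸ sum_le_sum hremoved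
  rw [sum_congr rfl fun j _ => hP j, sum_tsub_mul_eq _ _ _ _ hremoved, ← hf]
  rw [add_mul] at htotal
  omega
end

section
/- Let v : V → ℕ^ℓ assign profiles to the nodes of a finite rooted binary tree T, with v(b) = 0 on Steiner nodes. For a node u with children y and z, and any q ∈ ℤ^ℓ, the set of feasible 'net import' splits {(q_y, q_z) : q_y + q_z = q} when u is Steiner, or {(q_y, q_z) : v(u) + q − q_y − q_z ∈ F} when u is non-Steiner, characterizes exactly the partial solutions at u obtained by combining partial solutions at y and z with the appropriate flow across edges (u,y) and (u,z). Consequently, the recurrence M[u,q] = min over feasible (q_y,q_z) of M[y,q_y] + M[z,q_z] + d(u,y)·‖q_y‖₁ + d(u,z)·‖q_z‖₁ computes the minimum-cost partial fair assignment value defined for subtree T_u. -/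
/-!
A partial solution at `u` on `A ⊆ {u} ∪ V_y ∪ V_z` splits into partial solutions on
`A ∩ V_y`, `A ∩ V_z` and `A \ (V_y ∪ V_z) ⊆ {u}`: every unit of profile flowing between two
parts is re-read as an export from one part and an import into the other, both through `u`.
On a tree metric a crossing pair `(a, c)` satisfies `d(a,c) = d(a,u) + d(u,c)`, so this
restriction preserves the cost exactly; conversely, gluing partial solutions adds their costs.
Hence `M[u,q]` is an infimum over splittings `q = q_y + q_z + q_u` of a sum of three values.

Moving the root of the part in `V_y` from `u` to `y` saves `d(y,u)` per unit imported or
exported. By the triangle inequality, exported units may be routed directly to imported ones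
without extra cost, so an optimal solution never imports and exports the same profile
coordinate, and its transit in coordinate `j` is exactly `|q_y j|`. The part at `u` costs
nothing, and is feasible exactly when `v(u) + q_u ∈ F` (resp. `q_u = 0` if `u` is Steiner).
-/

open Finset

/-- `DPval ℓ d A v F u q` is the minimum cost `M[u,q]` of a partial fair assignment on
the subtree rooted at `u` whose non-Steiner locations (and centers) are `A`:
the minimum over assignments `r`, exported profiles `ρout` and imported profiles
`ρin` satisfying the conservation, fairness, and net-import constraints, of the
assignment cost plus the in/out transit cost to the root `u` (`⊤` if infeasible). -/
noncomputable def DPval {V : Type} [Fintype V] [DecidableEq V] (ℓ : ℕ)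
    (d : V → V → NNReal) (A : Finset V) (v : V → Fin ℓ → ℕ)
    (F : Set (Fin ℓ → ℕ)) (u : V) (q : Fin ℓ → ℤ) : ENNReal :=
  sInf { x : ENNReal |
    ∃ (r : V → V → Fin ℓ → ℕ) (ρin ρout : V → Fin ℓ → ℕ),
      (∀ y ∈ A, ∀ j, (∑ c ∈ A, r y c j) + ρout y j = v y j) ∧
      (∀ c ∈ A, (fun j => (∑ y ∈ A, r y c j) + ρin c j) ∈ F) ∧
      (∀ j, (∑ c ∈ A, (ρin c j : ℤ)) - (∑ y ∈ A, (ρout y j : ℤ)) = q j) ∧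
      x = (∑ y ∈ A, ∑ c ∈ A, (d y c : ENNReal) * (∑ j, r y c j : ℕ))
          + (∑ c ∈ A, (d c u : ENNReal) * (∑ j, ρin c j : ℕ))
          + (∑ y ∈ A, (d y u : ENNReal) * (∑ j, ρout y j : ℕ)) }

theorem Finset.sum_sum_mul_of_eq_add {ι R : Type*} [CommSemiring R] {C D : Finset ι}
    {g m : ι → ι → R} {x : ι → R} (h : ∀ a ∈ C, ∀ c ∈ D, g a c = x a + x c) :
    ∑ a ∈ C, ∑ c ∈ D, g a c * m a c =
      ∑ a ∈ C, x a * ∑ c ∈ D, m a c + ∑ c ∈ D, x c * ∑ a ∈ C, m a c := by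
  calc ∑ a ∈ C, ∑ c ∈ D, g a c * m a c = ∑ a ∈ C, ∑ c ∈ D, (x a * m a c + x c * m a c) :=
        sum_congr rfl fun a ha => sum_congr rfl fun c hc => by rw [h a ha c hc, add_mul]
    _ = _ := by
        simp only [sum_add_distrib, mul_sum]
        exact congrArg _ sum_comm

theorem Finset.exists_transport {V : Type} [DecidableEq V] (B : Finset V) (f g : V → ℕ) :
    ∃ m : V → V → ℕ, (∀ a, ∑ c ∈ B, m a c ≤ f a) ∧ (∀ c, ∑ a ∈ B, m a c ≤ g c) ∧
      ∑ a ∈ B, ∑ c ∈ B, m a c = min (∑ a ∈ B, f a) (∑ c ∈ B, g c) := by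
  obtain ⟨n, hn⟩ : ∃ n, min (∑ a ∈ B, f a) (∑ c ∈ B, g c) = n := ⟨_, rfl⟩
  rw [hn]
  induction n generalizing f g with
  | zero => exact ⟨0, by simp, by simp, by simp⟩
  | succ n ih =>
    have sum_sub_single {h : V → ℕ} {a : V} (ha : a ∈ B) (hha : h a ≠ 0) :
        ∑ x ∈ B, (h x - (Pi.single a 1 : V → ℕ) x) = ∑ x ∈ B, h x - 1 := by
      rw [sum_tsub_distrib B fun x _ => ?_, sum_pi_single', if_pos ha]
      rcases eq_or_ne x a with rfl | hx <;> simp [*]; omega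
    obtain ⟨a, ha, hfa⟩ := exists_ne_zero_of_sum_ne_zero (s := B) (f := f) (by omega)
    obtain ⟨c, hc, hgc⟩ := exists_ne_zero_of_sum_ne_zero (s := B) (f := g) (by omega)
    obtain ⟨m, hrow, hcol, htot⟩ := ih (fun x => f x - (Pi.single a 1 : V → ℕ) x)
      (fun x => g x - (Pi.single c 1 : V → ℕ) x)
      (by rw [sum_sub_single ha hfa, sum_sub_single hc hgc]; omega)
    set e : V → V → ℕ := Pi.single a (Pi.single c 1)
    have row_e (x : V) : ∑ w ∈ B, e x w = (Pi.single a 1 : V → ℕ) x := by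
      rcases eq_or_ne x a with rfl | hx <;> simp [e, sum_pi_single', *]
    have col_e (w : V) : ∑ x ∈ B, e x w = (Pi.single c 1 : V → ℕ) w := by
      rw [← Finset.sum_apply, sum_pi_single', if_pos ha]
    refine ⟨m + e, fun x => ?_, fun w => ?_, ?_⟩
    · have := hrow x
      rcases eq_or_ne x a with rfl | hx <;> simp_all [sum_add_distrib]
      omega
    · have := hcol w
      rcases eq_or_ne w c with rfl | hw <;> simp_all [sum_add_distrib]
      omega
    · simp [sum_add_distrib, htot, row_e, sum_pi_single', ha]

theorem sInf_setOf_exists_and_and_eq {α ι κ : Type*} [CompleteLattice α] (P Q : ι → κ → Prop)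
    (f : ι → κ → α) :
    sInf {x | ∃ i k, P i k ∧ Q i k ∧ x = f i k} = ⨅ i, ⨅ k, ⨅ (_ : P i k ∧ Q i k), f i k :=
  le_antisymm (le_iInf fun i => le_iInf fun k => le_iInf fun h => sInf_le ⟨i, k, h.1, h.2, rfl⟩)
    (le_sInf fun _ ⟨i, k, hP, hQ, hx⟩ => hx ▸ iInf₂_le_of_le i k (iInf_le _ ⟨hP, hQ⟩))

def l1Mass {ℓ : ℕ} : (Fin ℓ → ℕ) →+ ENNReal where
  toFun x := ((∑ j, x j : ℕ) : ENNReal)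
  map_zero' := by simp
  map_add' x y := by simp [sum_add_distrib]

theorem l1Mass_apply {ℓ : ℕ} (x : Fin ℓ → ℕ) : l1Mass x = ((∑ j, x j : ℕ) : ENNReal) := rfl

theorem l1Mass_mono {ℓ : ℕ} {x y : Fin ℓ → ℕ} (h : x ≤ y) : l1Mass x ≤ l1Mass y :=
  Nat.cast_le.2 (sum_le_sum fun j _ => h j)

structure PartialAssignment (V : Type) (ℓ : ℕ) where
  r : V → V → Fin ℓ → ℕ
  ρin : V → Fin ℓ → ℕ
  ρout : V → Fin ℓ → ℕ

namespace PartialAssignment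

section Basic

variable {V : Type} {ℓ : ℕ} {A : Finset V} {v : V → Fin ℓ → ℕ} {F : Set (Fin ℓ → ℕ)}
  {d : V → V → NNReal} {s : PartialAssignment V ℓ}

def IsFeasible (A : Finset V) (v : V → Fin ℓ → ℕ) (F : Set (Fin ℓ → ℕ))
    (s : PartialAssignment V ℓ) : Prop :=
  (∀ a ∈ A, ∑ c ∈ A, s.r a c + s.ρout a = v a) ∧ (∀ c ∈ A, ∑ a ∈ A, s.r a c + s.ρin c ∈ F)

def netImport (A : Finset V) (s : PartialAssignment V ℓ) : Fin ℓ → ℤ :=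
  fun j => ∑ c ∈ A, (s.ρin c j : ℤ) - ∑ a ∈ A, (s.ρout a j : ℤ)

def transit (A : Finset V) (s : PartialAssignment V ℓ) : Fin ℓ → ℕ :=
  ∑ c ∈ A, s.ρin c + ∑ a ∈ A, s.ρout a

noncomputable def cost (d : V → V → NNReal) (A : Finset V) (w : V)
    (s : PartialAssignment V ℓ) : ENNReal :=
  ∑ a ∈ A, ∑ c ∈ A, (d a c : ENNReal) * l1Mass (s.r a c)
    + ∑ c ∈ A, (d c w : ENNReal) * l1Mass (s.ρin c)
    + ∑ a ∈ A, (d a w : ENNReal) * l1Mass (s.ρout a)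

theorem netImport_apply (j : Fin ℓ) :
    s.netImport A j = ((∑ c ∈ A, s.ρin c) j : ℤ) - ((∑ a ∈ A, s.ρout a) j : ℤ) := by
  simp [netImport, Finset.sum_apply]

theorem natAbs_netImport_le_transit (j : Fin ℓ) : (s.netImport A j).natAbs ≤ s.transit A j := by
  rw [netImport_apply, transit, Pi.add_apply]
  omega

theorem cost_reroot {u y : V} (hroute : ∀ a ∈ A, d a u = d a y + d y u) :
    s.cost d A u = s.cost d A y + d y u * l1Mass (s.transit A) := by
  simp +contextual only [cost, transit, hroute, map_add, map_sum, ENNReal.coe_add, add_mul,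
    mul_add, mul_sum, sum_add_distrib]
  ring

theorem exists_isFeasible_singleton_iff (u : V) (q : Fin ℓ → ℤ) :
    (∃ s : PartialAssignment V ℓ, s.IsFeasible {u} v F ∧ s.netImport {u} = q) ↔
      ∃ p ∈ F, ∀ j, (p j : ℤ) = v u j + q j := by
  refine ⟨fun ⟨s, ⟨hcons, hfair⟩, hq⟩ => ⟨_, hfair u (mem_singleton_self u), fun j => ?_⟩,
    fun ⟨p, hp, hpq⟩ => ⟨⟨0, fun _ => p, fun _ => v u⟩, by simpa [IsFeasible] using hp, ?_⟩⟩
  · have := congrFun (hcons u (mem_singleton_self u)) j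
    have := congrFun hq j
    simp [netImport] at *
    omega
  · ext j; simp [netImport, hpq]

theorem exists_isFeasible_empty_iff (q : Fin ℓ → ℤ) :
    (∃ s : PartialAssignment V ℓ, s.IsFeasible ∅ v F ∧ s.netImport ∅ = q) ↔ q = 0 := by
  refine ⟨fun ⟨s, _, hq⟩ => ?_, fun hq => ⟨⟨0, 0, 0⟩, by simp [IsFeasible], ?_⟩⟩
  · rw [← hq]; ext j; simp [netImport]
  · rw [hq]; ext j; simp [netImport]

def ship (A : Finset V) (M : V → V → Fin ℓ → ℕ) (s : PartialAssignment V ℓ) :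
    PartialAssignment V ℓ where
  r a c := s.r a c + M a c
  ρin c := s.ρin c - ∑ a ∈ A, M a c
  ρout a := s.ρout a - ∑ c ∈ A, M a c

theorem ship_isFeasible {M : V → V → Fin ℓ → ℕ} (hrow : ∀ a, ∑ c ∈ A, M a c ≤ s.ρout a)
    (hcol : ∀ c, ∑ a ∈ A, M a c ≤ s.ρin c) (hs : s.IsFeasible A v F) :
    (s.ship A M).IsFeasible A v F := by
  refine ⟨fun a ha => ?_, fun c hc => ?_⟩
  · rw [← hs.1 a ha, ship, sum_add_distrib, add_assoc, add_tsub_cancel_of_le (hrow a)]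
  · convert hs.2 c hc using 1
    rw [ship, sum_add_distrib, add_assoc, add_tsub_cancel_of_le (hcol c)]

theorem cost_ship_le {M : V → V → Fin ℓ → ℕ} {w : V}
    (hrow : ∀ a, ∑ c ∈ A, M a c ≤ s.ρout a) (hcol : ∀ c, ∑ a ∈ A, M a c ≤ s.ρin c)
    (hsymm : ∀ a b, d a b = d b a) (htri : ∀ a b c, d a c ≤ d a b + d b c) :
    (s.ship A M).cost d A w ≤ s.cost d A w := by
  have hle (a c : V) : (d a c : ENNReal) ≤ d a w + d c w := by
    rw [← hsymm w c, ← ENNReal.coe_add, ENNReal.coe_le_coe]; exact htri a w c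
  have hmass_in (c : V) :
      l1Mass (s.ρin c) = l1Mass ((s.ship A M).ρin c) + ∑ a ∈ A, l1Mass (M a c) := by
    rw [← map_sum, ← map_add, ship, tsub_add_cancel_of_le (hcol c)]
  have hmass_out (a : V) :
      l1Mass (s.ρout a) = l1Mass ((s.ship A M).ρout a) + ∑ c ∈ A, l1Mass (M a c) := by
    rw [← map_sum, ← map_add, ship, tsub_add_cancel_of_le (hrow a)]
  calc (s.ship A M).cost d A w
      = ∑ a ∈ A, ∑ c ∈ A, (d a c : ENNReal) * l1Mass (s.r a c)
        + ∑ a ∈ A, ∑ c ∈ A, (d a c : ENNReal) * l1Mass (M a c)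
        + ∑ c ∈ A, (d c w : ENNReal) * l1Mass ((s.ship A M).ρin c)
        + ∑ a ∈ A, (d a w : ENNReal) * l1Mass ((s.ship A M).ρout a) := by
        simp only [cost, ship, map_add, mul_add, sum_add_distrib]
    _ ≤ ∑ a ∈ A, ∑ c ∈ A, (d a c : ENNReal) * l1Mass (s.r a c)
        + ∑ a ∈ A, ∑ c ∈ A, ((d a w : ENNReal) + d c w) * l1Mass (M a c)
        + ∑ c ∈ A, (d c w : ENNReal) * l1Mass ((s.ship A M).ρin c)
        + ∑ a ∈ A, (d a w : ENNReal) * l1Mass ((s.ship A M).ρout a) := by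
        gcongr with a _ c _; exact hle a c
    _ = s.cost d A w := by
        rw [sum_sum_mul_of_eq_add fun _ _ _ _ => rfl]
        simp only [cost, hmass_in, hmass_out, mul_add, sum_add_distrib]
        ring

end Basic

section GlueRestrict

variable {V : Type} [DecidableEq V] {ℓ : ℕ} {A B : Finset V} {v : V → Fin ℓ → ℕ}
  {F : Set (Fin ℓ → ℕ)} {d : V → V → NNReal} {w : V} {s t : PartialAssignment V ℓ}

def glue (B : Finset V) (s t : PartialAssignment V ℓ) : PartialAssignment V ℓ where
  r a c := if a ∈ B then (if c ∈ B then s.r a c else 0) else if c ∈ B then 0 else t.r a c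
  ρin c := if c ∈ B then s.ρin c else t.ρin c
  ρout a := if a ∈ B then s.ρout a else t.ρout a

def restrict (A C : Finset V) (s : PartialAssignment V ℓ) : PartialAssignment V ℓ where
  r := s.r
  ρin c := s.ρin c + ∑ a ∈ A \ C, s.r a c
  ρout a := s.ρout a + ∑ c ∈ A \ C, s.r a c

theorem glue_isFeasible (hBA : B ⊆ A) (hs : s.IsFeasible B v F)
    (ht : t.IsFeasible (A \ B) v F) : (glue B s t).IsFeasible A v F := by
  have hnot : ∀ x ∈ A \ B, x ∉ B := fun x hx => (mem_sdiff.1 hx).2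
  refine ⟨fun a ha => ?_, fun c hc => ?_⟩ <;> simp only [← sum_sdiff hBA]
  · by_cases haB : a ∈ B
    · simpa +contextual [glue, haB, hnot] using hs.1 a haB
    · simpa +contextual [glue, haB, hnot] using ht.1 a (mem_sdiff.2 ⟨ha, haB⟩)
  · by_cases hcB : c ∈ B
    · simpa +contextual [glue, hcB, hnot] using hs.2 c hcB
    · simpa +contextual [glue, hcB, hnot] using ht.2 c (mem_sdiff.2 ⟨hc, hcB⟩)

theorem netImport_glue (hBA : B ⊆ A) :
    (glue B s t).netImport A = s.netImport B + t.netImport (A \ B) := by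
  have hnot : ∀ x ∈ A \ B, x ∉ B := fun x hx => (mem_sdiff.1 hx).2
  ext j
  simp +contextual [netImport, glue, ← sum_sdiff hBA, hnot]
  ring

theorem cost_glue (hBA : B ⊆ A) :
    (glue B s t).cost d A w = s.cost d B w + t.cost d (A \ B) w := by
  have hnot : ∀ x ∈ A \ B, x ∉ B := fun x hx => (mem_sdiff.1 hx).2
  simp +contextual [cost, glue, ← sum_sdiff hBA, hnot]
  ring

theorem restrict_isFeasible (hBA : B ⊆ A) (hs : s.IsFeasible A v F) :
    (s.restrict A B).IsFeasible B v F := by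
  refine ⟨fun a ha => ?_, fun c hc => ?_⟩
  · rw [← hs.1 a (hBA ha), ← sum_sdiff hBA]
    simp only [restrict]
    abel
  · convert hs.2 c (hBA hc) using 1
    rw [← sum_sdiff hBA]
    simp only [restrict]
    abel

theorem netImport_restrict_add (hBA : B ⊆ A) :
    (s.restrict A B).netImport B + (s.restrict A (A \ B)).netImport (A \ B) =
      s.netImport A := by
  ext j
  simp only [netImport, restrict, Pi.add_apply, Finset.sum_apply, Nat.cast_add, Nat.cast_sum,
    sum_add_distrib, Finset.sdiff_sdiff_eq_self hBA, ← sum_sdiff hBA]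
  rw [sum_comm (s := B) (t := A \ B), sum_comm (s := B) (t := A \ B)]
  ring

theorem cost_restrict_add (hBA : B ⊆ A) (hsymm : ∀ a b, d a b = d b a)
    (hcross : ∀ a ∈ B, ∀ c ∈ A \ B, d a c = d a w + d w c) :
    (s.restrict A B).cost d B w + (s.restrict A (A \ B)).cost d (A \ B) w = s.cost d A w := by
  have hin : ∀ a ∈ B, ∀ c ∈ A \ B, (d a c : ENNReal) = d a w + d c w := fun a ha c hc => by
    rw [hcross a ha c hc, hsymm w c, ENNReal.coe_add]
  have hout : ∀ a ∈ A \ B, ∀ c ∈ B, (d a c : ENNReal) = d a w + d c w := fun a ha c hc => by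
    rw [hsymm a c, add_comm, hin c hc a ha]
  simp only [cost, restrict, map_add, map_sum, mul_add, sum_add_distrib,
    Finset.sdiff_sdiff_eq_self hBA, ← sum_sdiff hBA]
  rw [sum_sum_mul_of_eq_add hin, sum_sum_mul_of_eq_add hout]
  ring

theorem exists_transit_eq_natAbs (hsymm : ∀ a b, d a b = d b a)
    (htri : ∀ a b c, d a c ≤ d a b + d b c) (hs : s.IsFeasible B v F) :
    ∃ s' : PartialAssignment V ℓ, s'.IsFeasible B v F ∧ s'.netImport B = s.netImport B ∧
      (∀ j, s'.transit B j = (s.netImport B j).natAbs) ∧ s'.cost d B w ≤ s.cost d B w := by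
  choose m hrow hcol htot using fun j =>
    exists_transport B (fun a => s.ρout a j) (fun c => s.ρin c j)
  set M : V → V → Fin ℓ → ℕ := fun a c j => m j a c
  have hrowM (a : V) : ∑ c ∈ B, M a c ≤ s.ρout a := fun j => by
    simpa [M, Finset.sum_apply] using hrow j a
  have hcolM (c : V) : ∑ a ∈ B, M a c ≤ s.ρin c := fun j => by
    simpa [M, Finset.sum_apply] using hcol j c
  have hin : ∑ c ∈ B, (s.ship B M).ρin c = ∑ c ∈ B, s.ρin c - ∑ a ∈ B, ∑ c ∈ B, M a c := by
    rw [ship, sum_tsub_distrib B fun c _ => hcolM c, sum_comm (s := B) (t := B)]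
  have hout : ∑ a ∈ B, (s.ship B M).ρout a = ∑ a ∈ B, s.ρout a - ∑ a ∈ B, ∑ c ∈ B, M a c :=
    sum_tsub_distrib B fun a _ => hrowM a
  have htotM (j : Fin ℓ) : (∑ a ∈ B, ∑ c ∈ B, M a c) j =
      min ((∑ a ∈ B, s.ρout a) j) ((∑ c ∈ B, s.ρin c) j) := by
    simpa [M, Finset.sum_apply] using htot j
  refine ⟨s.ship B M, ship_isFeasible hrowM hcolM hs, funext fun j => ?_, fun j => ?_,
    cost_ship_le hrowM hcolM hsymm htri⟩
  · have := htotM j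
    rw [netImport_apply, netImport_apply, hin, hout, Pi.sub_apply, Pi.sub_apply]
    omega
  · have := htotM j
    rw [netImport_apply, transit, Pi.add_apply, hin, hout, Pi.sub_apply, Pi.sub_apply]
    omega

end GlueRestrict

end PartialAssignment

open PartialAssignment

section DPval

variable {V : Type} [Fintype V] [DecidableEq V] {ℓ : ℕ} {d : V → V → NNReal}
  {v : V → Fin ℓ → ℕ} {F : Set (Fin ℓ → ℕ)}

theorem DPval_eq_iInf (A : Finset V) (w : V) (q : Fin ℓ → ℤ) :
    DPval ℓ d A v F w q =
      ⨅ (s : PartialAssignment V ℓ) (_ : s.IsFeasible A v F ∧ s.netImport A = q),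
        s.cost d A w := by
  have sum_add_eq (f : V → Fin ℓ → ℕ) (x : Fin ℓ → ℕ) :
      ∑ a ∈ A, f a + x = fun j => ∑ a ∈ A, f a j + x j := by
    ext j; simp [Finset.sum_apply]
  have feasible_iff (s : PartialAssignment V ℓ) : s.IsFeasible A v F ↔
      (∀ a ∈ A, ∀ j, ∑ c ∈ A, s.r a c j + s.ρout a j = v a j) ∧
        ∀ c ∈ A, (fun j => ∑ a ∈ A, s.r a c j + s.ρin c j) ∈ F := by
    simp only [IsFeasible, sum_add_eq, funext_iff]
  refine le_antisymm (le_iInf₂ fun s ⟨hs, hq⟩ => sInf_le ?_) (le_sInf ?_)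
  · exact ⟨s.r, s.ρin, s.ρout, ((feasible_iff s).1 hs).1, ((feasible_iff s).1 hs).2,
      fun j => hq ▸ rfl, by simp only [cost, l1Mass_apply]⟩
  · rintro x ⟨r, ρin, ρout, hcons, hfair, hq, rfl⟩
    refine (iInf₂_le ⟨r, ρin, ρout⟩ ⟨(feasible_iff _).2 ⟨hcons, hfair⟩, funext hq⟩).trans_eq ?_
    simp only [cost, l1Mass_apply]

theorem DPval_eq_iInf_add_sdiff {A B : Finset V} {w : V} (hBA : B ⊆ A)
    (hsymm : ∀ a b, d a b = d b a) (hcross : ∀ a ∈ B, ∀ c ∈ A \ B, d a c = d a w + d w c)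
    (q : Fin ℓ → ℤ) :
    DPval ℓ d A v F w q = ⨅ qB, DPval ℓ d B v F w qB + DPval ℓ d (A \ B) v F w (q - qB) := by
  simp only [DPval_eq_iInf, ENNReal.iInf_add, ENNReal.add_iInf]
  refine le_antisymm
    (le_iInf fun qB => le_iInf₂ fun t ⟨ht, hqt⟩ => le_iInf₂ fun s ⟨hs, hqs⟩ => ?_)
    (le_iInf₂ fun s ⟨hs, hq⟩ => ?_)
  · refine (iInf₂_le (glue B s t) ⟨glue_isFeasible hBA hs ht, ?_⟩).trans_eq (cost_glue hBA)
    rw [netImport_glue hBA, hqs, hqt, add_sub_cancel]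
  · refine (iInf_le _ ((s.restrict A B).netImport B)).trans <|
      (iInf₂_le _ ⟨restrict_isFeasible sdiff_subset hs, ?_⟩).trans <|
      (iInf₂_le _ ⟨restrict_isFeasible hBA hs, rfl⟩).trans_eq
      (cost_restrict_add hBA hsymm hcross)
    rw [← hq, ← netImport_restrict_add hBA, add_sub_cancel_left]

theorem DPval_reroot {B : Finset V} {u y : V} (hsymm : ∀ a b, d a b = d b a)
    (htri : ∀ a b c, d a c ≤ d a b + d b c) (hroute : ∀ a ∈ B, d a u = d a y + d y u)
    (q : Fin ℓ → ℤ) :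
    DPval ℓ d B v F u q = DPval ℓ d B v F y q + d y u * l1Mass (fun j => (q j).natAbs) := by
  simp only [DPval_eq_iInf, ENNReal.iInf_add]
  refine le_antisymm (le_iInf₂ fun s ⟨hs, hq⟩ => ?_) (le_iInf₂ fun s ⟨hs, hq⟩ => ?_)
  · obtain ⟨s', hs', hq', htransit, hcost⟩ := exists_transit_eq_natAbs (w := y) hsymm htri hs
    refine (iInf₂_le s' ⟨hs', hq'.trans hq⟩).trans ?_
    rw [cost_reroot hroute, funext htransit, hq]
    exact add_le_add hcost le_rfl
  · refine (iInf₂_le s ⟨hs, hq⟩).trans ?_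
    rw [cost_reroot hroute, ← hq]
    gcongr
    exact l1Mass_mono fun j => natAbs_netImport_le_transit j

theorem DPval_of_subset_singleton {U : Finset V} {u : V} (hU : U ⊆ {u}) (hself : d u u = 0)
    (q : Fin ℓ → ℤ) :
    DPval ℓ d U v F u q =
      ⨅ (_ : (u ∈ U → ∃ p ∈ F, ∀ j, (p j : ℤ) = v u j + q j) ∧ (u ∉ U → q = 0)), 0 := by
  rcases subset_singleton_iff.1 hU with rfl | rfl
  · simp [DPval_eq_iInf, cost, ← exists_isFeasible_empty_iff (v := v) (F := F)]
  · simp [DPval_eq_iInf, cost, hself, ← exists_isFeasible_singleton_iff]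

end DPval

theorem DP_recurrence_general {V : Type} [Fintype V] [DecidableEq V] (ℓ : ℕ)
    (d : V → V → NNReal) (v : V → Fin ℓ → ℕ) (F : Set (Fin ℓ → ℕ))
    (u y z : V) (Vy Vz : Finset V) (A : Finset V)
    (hdisj : Disjoint Vy Vz)
    (huy : u ∉ Vy) (huz : u ∉ Vz)
    (hA : A ⊆ insert u (Vy ∪ Vz))
    (hsymm : ∀ a b, d a b = d b a) (hself : ∀ a, d a a = 0)
    (htri : ∀ a b c, d a c ≤ d a b + d b c)
    (hty : ∀ a ∈ Vy, d a u = d a y + d y u)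
    (htz : ∀ b ∈ Vz, d b u = d b z + d z u)
    (htyz : ∀ a ∈ Vy, ∀ b ∈ Vz, d a b = d a u + d u b)
    (q : Fin ℓ → ℤ) :
    DPval ℓ d A v F u q =
      sInf { x : ENNReal | ∃ qy qz : Fin ℓ → ℤ,
        (u ∈ A → ∃ p ∈ F, ∀ j, (p j : ℤ) = (v u j : ℤ) + q j - qy j - qz j) ∧
        (u ∉ A → ∀ j, q j = qy j + qz j) ∧
        x = DPval ℓ d (A ∩ Vy) v F y qy + DPval ℓ d (A ∩ Vz) v F z qz
            + (d u y : ENNReal) * (∑ j, (qy j).natAbs : ℕ)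
            + (d u z : ENNReal) * (∑ j, (qz j).natAbs : ℕ) } := by
  have hAz : A ∩ Vz ⊆ A \ (A ∩ Vy) := fun c hc => mem_sdiff.2
    ⟨(mem_inter.1 hc).1, fun h => disjoint_left.1 hdisj (mem_inter.1 h).2 (mem_inter.1 hc).2⟩
  have hU : (A \ (A ∩ Vy)) \ (A ∩ Vz) ⊆ {u} := fun c hc => by
    have := @hA c; simp_all
  have huU : u ∈ (A \ (A ∩ Vy)) \ (A ∩ Vz) ↔ u ∈ A := by simp [huy, huz]
  have hcross_y : ∀ a ∈ A ∩ Vy, ∀ c ∈ A \ (A ∩ Vy), d a c = d a u + d u c := by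
    intro a ha c hc
    rcases mem_insert.1 (hA (mem_sdiff.1 hc).1) with rfl | hc'
    · simp [hself]
    · exact htyz a (mem_inter.1 ha).2 c (by simp_all)
  have hcross_z : ∀ a ∈ A ∩ Vz, ∀ c ∈ (A \ (A ∩ Vy)) \ (A ∩ Vz), d a c = d a u + d u c :=
    fun a _ c hc => by simp [mem_singleton.1 (hU hc), hself]
  rw [sInf_setOf_exists_and_and_eq, DPval_eq_iInf_add_sdiff inter_subset_left hsymm hcross_y]
  simp_rw [DPval_eq_iInf_add_sdiff hAz hsymm hcross_z, DPval_of_subset_singleton hU (hself u),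
    huU, ENNReal.add_iInf, add_zero, DPval_reroot hsymm htri fun a ha => hty a (mem_inter.1 ha).2,
    DPval_reroot hsymm htri fun a ha => htz a (mem_inter.1 ha).2]
  refine iInf_congr fun qy => iInf_congr fun qz => iInf_congr_Prop ?_ fun _ => ?_
  · simp only [Pi.sub_apply, ← add_sub_assoc, funext_iff, Pi.add_apply, sub_sub,
      sub_eq_zero]
  · rw [l1Mass_apply, l1Mass_apply, hsymm y u, hsymm z u, add_add_add_comm, ← add_assoc]

/-- Correctness of the DP recurrence (Lemma 3.4, recursive case): for a node `u` with
children `y` and `z` whose subtrees have vertex sets `Vy` and `Vz`, the value `M[u,q]`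
equals the minimum over feasible net-import splits `(q_y, q_z)` — requiring
`v(u) + q − q_y − q_z ∈ F` when `u` is non-Steiner, and `q = q_y + q_z` when `u` is
Steiner — of `M[y,q_y] + M[z,q_z] + d(u,y)·‖q_y‖₁ + d(u,z)·‖q_z‖₁`. -/
theorem DP_recurrence {V : Type} [Fintype V] [DecidableEq V] (ℓ : ℕ)
    (d : V → V → NNReal) (v : V → Fin ℓ → ℕ) (F : Set (Fin ℓ → ℕ))
    (u y z : V) (Vy Vz : Finset V) (A : Finset V)
    (hy : y ∈ Vy) (hz : z ∈ Vz) (hdisj : Disjoint Vy Vz)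
    (huy : u ∉ Vy) (huz : u ∉ Vz)
    (hA : A ⊆ insert u (Vy ∪ Vz))
    (hsymm : ∀ a b, d a b = d b a) (hself : ∀ a, d a a = 0)
    (htri : ∀ a b c, d a c ≤ d a b + d b c)
    (hty : ∀ a ∈ Vy, d a u = d a y + d y u)
    (htz : ∀ b ∈ Vz, d b u = d b z + d z u)
    (htyz : ∀ a ∈ Vy, ∀ b ∈ Vz, d a b = d a u + d u b)
    (hvSteiner : u ∉ A → v u = 0)
    (q : Fin ℓ → ℤ) :
    DPval ℓ d A v F u q =
      sInf { x : ENNReal | ∃ qy qz : Fin ℓ → ℤ,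
        (u ∈ A → ∃ p ∈ F, ∀ j, (p j : ℤ) = (v u j : ℤ) + q j - qy j - qz j) ∧
        (u ∉ A → ∀ j, q j = qy j + qz j) ∧
        x = DPval ℓ d (A ∩ Vy) v F y qy + DPval ℓ d (A ∩ Vz) v F z qz
            + (d u y : ENNReal) * (∑ j, (qy j).natAbs : ℕ)
            + (d u z : ENNReal) * (∑ j, (qz j).natAbs : ℕ) } :=
  DP_recurrence_general ℓ d v F u y z Vy Vz A hdisj huy huz hA hsymm hself htri hty htz htyz q
end
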